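/- Let X ⊆ ℂ^n have tangent cone at infinity equal to the linear subspace L = {(x,y) : y = 0}, and let π be the orthogonal projection onto L. If γ : (ε, ∞) → X is a curve with ‖γ(t)‖ → +∞ and π(γ(t)) = tv + o(t) for some v ∈ L, then γ(t) = t(v,0) + o(t). -/

import Mathlib

open Set Filter Metric

/-- `E` is a tangent cone of `X` at infinity: for some sequence `t_j → ∞`, the rescaled
sphere slices `(1/t_j)(X ∩ {‖x‖ = t_j})` converge in the Hausdorff sense to a subset `D`
of the unit sphere, and `E` is the cone over `D`. -/
def IsTangentConeAtInfinity {V : Type*} [NormedAddCommGroup V] [NormedSpace ℝ V]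
    (X E : Set V) : Prop :=
  ∃ (t : ℕ → ℝ) (D : Set V),
    (∀ j, 0 < t j) ∧ Tendsto t atTop atTop ∧ D ⊆ Metric.sphere (0 : V) 1 ∧
    Tendsto (fun j => EMetric.hausdorffEdist
        ((fun x => (t j)⁻¹ • x) '' (X ∩ Metric.sphere (0 : V) (t j))) D) atTop (nhds 0) ∧
    E = {x | ∃ s : ℝ, 0 ≤ s ∧ ∃ v ∈ D, x = s • v}

/-- In coordinates `ℂⁿ = ℂᵈ × ℂᵉ`, the first (`x`) component of `z`. -/
def xPart {d e : ℕ} (z : EuclideanSpace ℂ (Fin (d + e))) : EuclideanSpace ℂ (Fin d) :=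
  WithLp.toLp 2 (fun i => z (Fin.castAdd e i))

/-- In coordinates `ℂⁿ = ℂᵈ × ℂᵉ`, the second (`y`) component of `z`. -/
def yPart {d e : ℕ} (z : EuclideanSpace ℂ (Fin (d + e))) : EuclideanSpace ℂ (Fin e) :=
  WithLp.toLp 2 (fun i => z (Fin.natAdd d i))

/-!
Along any sequence of points of `X` going to infinity, the rescaled sphere slices
`(1/r)(X ∩ {‖x‖ = r})` have a Hausdorff-convergent subsequence (Blaschke selection on the compact
unit sphere). The cone over the limit is a tangent cone at infinity, hence lies in `L`, so the
directions `γ(t)/‖γ(t)‖` approach `L`: `y(t) = o(‖γ(t)‖)`. As `‖γ(t)‖ ≤ ‖x(t)‖ + ‖y(t)‖` and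
`x(t) = O(t)`, this forces `y(t) = o(t)`.
-/

open Asymptotics Topology TopologicalSpace

theorem exists_strictMono_tendsto_hausdorffEDist {α : Type*} [EMetricSpace α] {K : Set α}
    (hK : IsCompact K) {A : ℕ → Set α} (hA : ∀ n, A n ⊆ K) :
    ∃ D ⊆ K, ∃ φ : ℕ → ℕ, StrictMono φ ∧
      Tendsto (fun n => hausdorffEDist (A (φ n)) D) atTop (𝓝 0) := by
  have hclK : ∀ n, closure (A n) ⊆ K := fun n => closure_minimal (hA n) hK.isClosed
  let C : ℕ → Compacts α := fun n =>
    ⟨closure (A n), hK.of_isClosed_subset isClosed_closure (hclK n)⟩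
  obtain ⟨D, hDK, φ, hφ, hCD⟩ :=
    (Compacts.isCompact_subsets_of_isCompact hK).tendsto_subseq (x := C) hclK
  refine ⟨D, hDK, φ, hφ, ?_⟩
  simpa [C, Compacts.edist_eq, hausdorffEDist_closure_left] using tendsto_iff_edist_tendsto_0.1 hCD

namespace Asymptotics

variable {α E F G : Type*} [NormedAddCommGroup E] [NormedAddCommGroup F] [NormedAddCommGroup G]
  {l : Filter α}

theorem IsLittleO.of_norm_le_norm_add_norm {f : α → E} {g : α → F} {n : α → G} (h : f =o[l] n)
    (hn : ∀ᶠ a in l, ‖n a‖ ≤ ‖g a‖ + ‖f a‖) : f =o[l] g := by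
  have hf : f =o[l] fun a => ‖g a‖ + ‖f a‖ :=
    h.trans_isBigO <| IsBigO.of_bound 1 <| hn.mono fun a ha => by
      rwa [one_mul, Real.norm_of_nonneg (by positivity)]
  -- `‖f‖ ≤ ½ (‖g‖ + ‖f‖)` eventually, so `‖g‖ + ‖f‖ ≤ 2 ‖g‖`.
  have hsum : (fun a => ‖g a‖ + ‖f a‖) =O[l] g :=
    isBigO_norm_right.1
      (hf.norm_left.right_isBigO_sub.congr_right fun a => add_sub_cancel_right _ _)
  exact hf.trans_isBigO hsum

theorem isBigO_of_tendsto_inv_smul [NormedSpace ℝ E] {u : ℝ → E} {c : E}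
    (h : Tendsto (fun t => t⁻¹ • u t) atTop (𝓝 c)) : u =O[atTop] fun t => t := by
  refine ((isBigO_refl (fun t : ℝ => t) atTop).smul (h.isBigO_one ℝ)).congr' ?_ ?_
  · filter_upwards [eventually_ne_atTop 0] with t ht
    rw [smul_smul, mul_inv_cancel₀ ht, one_smul]
  · exact Eventually.of_forall fun t => by simp

end Asymptotics

section TangentConeAtInfinity

variable {V : Type*} [NormedAddCommGroup V] [NormedSpace ℝ V]

def rescaledSlice (X : Set V) (r : ℝ) : Set V :=
  (fun x => r⁻¹ • x) '' (X ∩ sphere 0 r)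

theorem rescaledSlice_subset_sphere (X : Set V) {r : ℝ} (hr : 0 < r) :
    rescaledSlice X r ⊆ sphere 0 1 := by
  rintro _ ⟨x, ⟨-, hx⟩, rfl⟩
  rw [mem_sphere_zero_iff_norm] at hx ⊢
  rw [norm_smul, hx, norm_inv, Real.norm_of_nonneg hr.le, inv_mul_cancel₀ hr.ne']

theorem inv_norm_smul_mem_rescaledSlice {X : Set V} {x : V} (hx : x ∈ X) :
    ‖x‖⁻¹ • x ∈ rescaledSlice X ‖x‖ :=
  ⟨x, ⟨hx, mem_sphere_zero_iff_norm.2 rfl⟩, rfl⟩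

variable [ProperSpace V]

theorem exists_isTangentConeAtInfinity_tendsto_hausdorffEDist (X : Set V) {s : ℕ → ℝ}
    (hs0 : ∀ n, 0 < s n) (hs : Tendsto s atTop atTop) :
    ∃ D : Set V, ∃ φ : ℕ → ℕ,
      IsTangentConeAtInfinity X {x | ∃ r : ℝ, 0 ≤ r ∧ ∃ v ∈ D, x = r • v} ∧
      Tendsto (fun n => hausdorffEDist (rescaledSlice X (s (φ n))) D) atTop (𝓝 0) := by
  obtain ⟨D, hD, φ, hφ, hconv⟩ := exists_strictMono_tendsto_hausdorffEDist
    (isCompact_sphere (0 : V) 1) fun n => rescaledSlice_subset_sphere X (hs0 n)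
  exact ⟨D, φ, ⟨s ∘ φ, D, fun n => hs0 _, hs.comp hφ.tendsto_atTop, hD, hconv, rfl⟩, hconv⟩

theorem exists_tendsto_infEDist_of_tangentCones_subset {X L : Set V}
    (hL : ∀ E, IsTangentConeAtInfinity X E → E ⊆ L) {p : ℕ → V} (hpX : ∀ n, p n ∈ X)
    (hp0 : ∀ n, 0 < ‖p n‖) (hp : Tendsto (‖p ·‖) atTop atTop) :
    ∃ φ : ℕ → ℕ, Tendsto (fun n => infEDist (‖p (φ n)‖⁻¹ • p (φ n)) L) atTop (𝓝 0) := by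
  obtain ⟨D, φ, hcone, hconv⟩ := exists_isTangentConeAtInfinity_tendsto_hausdorffEDist X hp0 hp
  have hDL : D ⊆ L := fun w hw => hL _ hcone ⟨1, zero_le_one, w, hw, (one_smul ℝ w).symm⟩
  refine ⟨φ, tendsto_of_tendsto_of_tendsto_of_le_of_le tendsto_const_nhds hconv
    (fun _ => bot_le) fun n => ?_⟩
  exact (infEDist_anti hDL).trans
    (infEDist_le_hausdorffEDist_of_mem (inv_norm_smul_mem_rescaledSlice (hpX _)))

theorem tendsto_infDist_inv_norm_smul_of_tangentCones_subset {X L : Set V}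
    (hL : ∀ E, IsTangentConeAtInfinity X E → E ⊆ L) {ι : Type*} {l : Filter ι}
    [l.IsCountablyGenerated] {z : ι → V} (hzX : ∀ᶠ i in l, z i ∈ X)
    (hz : Tendsto (‖z ·‖) l atTop) :
    Tendsto (fun i => infDist (‖z i‖⁻¹ • z i) L) l (𝓝 0) := by
  refine tendsto_of_subseq_tendsto fun ns hns => ?_
  obtain ⟨N, hN⟩ := eventually_atTop.1
    ((hns.eventually hzX).and ((hz.comp hns).eventually_gt_atTop 0))
  obtain ⟨φ, hφ⟩ := exists_tendsto_infEDist_of_tangentCones_subset hL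
    (p := fun n => z (ns (n + N))) (fun n => (hN _ (Nat.le_add_left N n)).1)
    (fun n => (hN _ (Nat.le_add_left N n)).2) ((hz.comp hns).comp (tendsto_add_atTop_nat N))
  exact ⟨fun n => φ n + N, (ENNReal.tendsto_toReal ENNReal.zero_ne_top).comp hφ⟩

end TangentConeAtInfinity

section Coordinates

variable {d e : ℕ}

theorem yPart_sub (a b : EuclideanSpace ℂ (Fin (d + e))) :
    yPart (a - b) = yPart a - yPart b := by
  ext i; simp [yPart]

theorem yPart_smul (r : ℝ) (a : EuclideanSpace ℂ (Fin (d + e))) :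
    yPart (r • a) = r • yPart a := by
  ext i; simp [yPart]

theorem norm_sq_eq_norm_xPart_sq_add_norm_yPart_sq (z : EuclideanSpace ℂ (Fin (d + e))) :
    ‖z‖ ^ 2 = ‖xPart z‖ ^ 2 + ‖yPart z‖ ^ 2 := by
  simp only [EuclideanSpace.norm_sq_eq, Fin.sum_univ_add, xPart, yPart]

theorem norm_yPart_le (z : EuclideanSpace ℂ (Fin (d + e))) : ‖yPart z‖ ≤ ‖z‖ := by
  have := norm_sq_eq_norm_xPart_sq_add_norm_yPart_sq z
  nlinarith [norm_nonneg z, norm_nonneg (yPart z)]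

theorem norm_le_norm_xPart_add_norm_yPart (z : EuclideanSpace ℂ (Fin (d + e))) :
    ‖z‖ ≤ ‖xPart z‖ + ‖yPart z‖ := by
  have := norm_sq_eq_norm_xPart_sq_add_norm_yPart_sq z
  nlinarith [norm_nonneg z, norm_nonneg (yPart z), norm_nonneg (xPart z)]

theorem norm_yPart_le_infDist (w : EuclideanSpace ℂ (Fin (d + e))) :
    ‖yPart w‖ ≤ infDist w {z | yPart z = 0} := by
  refine (le_infDist ⟨0, by ext; simp [yPart]⟩).2 fun z (hz : yPart z = 0) => ?_
  simpa [yPart_sub, hz, dist_eq_norm] using norm_yPart_le (w - z)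

theorem isLittleO_yPart_of_tendsto_infDist {α : Type*} {l : Filter α}
    {z : α → EuclideanSpace ℂ (Fin (d + e))}
    (h : Tendsto (fun a => infDist (‖z a‖⁻¹ • z a) {w | yPart w = 0}) l (𝓝 0)) :
    (fun a => yPart (z a)) =o[l] z := by
  refine isLittleO_norm_norm.1 <| (isLittleO_iff_tendsto fun a ha => ?_).2 <|
    squeeze_zero (fun _ => by positivity) (fun a => ?_) h
  · exact le_antisymm (ha ▸ norm_yPart_le (z a)) (norm_nonneg _)
  · simpa [yPart_smul, norm_smul, div_eq_inv_mul] using norm_yPart_le_infDist (‖z a‖⁻¹ • z a)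

end Coordinates

theorem lifting_tangent_at_infinity_general (d e : ℕ)
    (X : Set (EuclideanSpace ℂ (Fin (d + e))))
    (L : Set (EuclideanSpace ℂ (Fin (d + e))))
    (hL : L = {z | yPart z = 0})
    (huniq : ∀ E, IsTangentConeAtInfinity X E → E = L)
    (ε : ℝ) (γ : ℝ → EuclideanSpace ℂ (Fin (d + e)))
    (hγX : ∀ t ∈ Set.Ioi ε, γ t ∈ X)
    (hγtop : Tendsto (fun t => ‖γ t‖) atTop atTop)
    (v : EuclideanSpace ℂ (Fin d))
    (hx : Tendsto (fun t : ℝ => (t : ℝ)⁻¹ • (xPart (γ t) - t • v)) atTop (nhds 0)) :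
    Tendsto (fun t : ℝ => (t : ℝ)⁻¹ • yPart (γ t)) atTop (nhds 0) := by
  have hcones : ∀ E, IsTangentConeAtInfinity X E → E ⊆ {z | yPart z = 0} :=
    fun E hE => (huniq E hE).trans hL |>.subset
  have hy : (fun t => yPart (γ t)) =o[atTop] γ :=
    isLittleO_yPart_of_tendsto_infDist <| tendsto_infDist_inv_norm_smul_of_tangentCones_subset
      hcones ((eventually_gt_atTop ε).mono hγX) hγtop
  have hxO : (fun t => xPart (γ t)) =O[atTop] fun t => t := by
    refine isBigO_of_tendsto_inv_smul ((zero_add v ▸ hx.add_const v).congr' ?_)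
    filter_upwards [eventually_ne_atTop 0] with t ht
    rw [smul_sub, smul_smul, inv_mul_cancel₀ ht, one_smul, sub_add_cancel]
  exact ((hy.of_norm_le_norm_add_norm (Eventually.of_forall fun t =>
    norm_le_norm_xPart_add_norm_yPart (γ t))).trans_isBigO hxO).tendsto_inv_smul_nhds_zero

/-- Suppose the tangent cone at infinity of `X ⊆ ℂⁿ` is `L = {(x,y) : y = 0}` (in
coordinates `ℂⁿ = ℂᵈ × ℂᵉ`) and `π` is the orthogonal projection onto `L`. If
`γ : (ε, ∞) → X` satisfies `‖γ(t)‖ → ∞` and `π(γ(t)) = t v + o(t)`, then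
`γ(t) = t (v, 0) + o(t)`, i.e. the `y`-part of `γ(t)` is `o(t)`. -/
theorem lifting_tangent_at_infinity (d e : ℕ)
    (X : Set (EuclideanSpace ℂ (Fin (d + e))))
    (L : Set (EuclideanSpace ℂ (Fin (d + e))))
    (hL : L = {z | yPart z = 0})
    (hcone : IsTangentConeAtInfinity X L)
    (huniq : ∀ E, IsTangentConeAtInfinity X E → E = L)
    (ε : ℝ) (γ : ℝ → EuclideanSpace ℂ (Fin (d + e)))
    (hγX : ∀ t ∈ Set.Ioi ε, γ t ∈ X)
    (hγtop : Tendsto (fun t => ‖γ t‖) atTop atTop)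
    (v : EuclideanSpace ℂ (Fin d))
    (hx : Tendsto (fun t : ℝ => (t : ℝ)⁻¹ • (xPart (γ t) - t • v)) atTop (nhds 0)) :
    Tendsto (fun t : ℝ => (t : ℝ)⁻¹ • yPart (γ t)) atTop (nhds 0) :=
  lifting_tangent_at_infinity_general d e X L hL huniq ε γ hγX hγtop v hx
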